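/- arXiv:1805.08758 — 2 statements merged into one kernel-verified Lean document; each statement's English description precedes it below -/
import Mathlib

section
/- In the two-firm network with choice functions C_I^f and C^g, the empty outcome is not stable, and the unique blocking set is X_I ∪ {y}. -/
open Finset

/-- A trading network: firms `F`, contracts `X`, seller/buyer maps, and choice functions. -/
structure TradingNetwork (F X : Type) where
  sell : X → F
  buy  : X → F
  C : F → Finset X → Finset X

namespace TradingNetwork

variable {F X : Type} [DecidableEq F] [DecidableEq X] [Fintype X]

/-- The contracts in `Y` involving firm `f`. -/
def own (N : TradingNetwork F X) (f : F) (Y : Finset X) : Finset X :=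
  Y.filter fun x => N.sell x = f ∨ N.buy x = f

/-- Upstream contracts of `f` (contracts where `f` is the buyer). -/
def XB (N : TradingNetwork F X) (f : F) : Finset X := univ.filter fun x => N.buy x = f

/-- Downstream contracts of `f` (contracts where `f` is the seller). -/
def XS (N : TradingNetwork F X) (f : F) : Finset X := univ.filter fun x => N.sell x = f

/-- A terminal agent: a terminal seller (no upstream contracts) or terminal buyer. -/
def Terminal (N : TradingNetwork F X) (f : F) : Prop := N.XB f = ∅ ∨ N.XS f = ∅

/-- `S` consists of the `k` most preferred elements of `Y` according to the
rank function `r` (lower rank = more preferred). -/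
def IsTop (r : X → ℕ) (k : ℕ) (Y S : Finset X) : Prop :=
  S ⊆ Y ∧ S.card = k ∧ ∀ x ∈ S, ∀ y ∈ Y, y ∉ S → r x < r y

/-- The choice functions of `N` are flow-based with respect to the preference ranks
`rkB` (over upstream contracts) and `rkS` (over downstream contracts): terminal agents
accept everything, and a non-terminal agent offered upstream contracts `Y ∩ XB f` and
downstream contracts `Y ∩ XS f` chooses its `k = min (|Y ∩ XB f|) (|Y ∩ XS f|)` most
preferred contracts on each side. -/
structure FlowBased (N : TradingNetwork F X) (rkB rkS : F → X → ℕ) : Prop where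
  injB : ∀ f, ∀ x ∈ N.XB f, ∀ y ∈ N.XB f, rkB f x = rkB f y → x = y
  injS : ∀ f, ∀ x ∈ N.XS f, ∀ y ∈ N.XS f, rkS f x = rkS f y → x = y
  C_own : ∀ f Y, N.C f Y ⊆ N.own f Y
  terminal_accepts : ∀ f, N.Terminal f → ∀ Y, N.C f Y = N.own f Y
  top_choice : ∀ f, ¬ N.Terminal f → ∀ Y : Finset X,
      IsTop (rkB f) (min (Y ∩ N.XB f).card (Y ∩ N.XS f).card)
        (Y ∩ N.XB f) (N.C f Y ∩ N.XB f)
    ∧ IsTop (rkS f) (min (Y ∩ N.XB f).card (Y ∩ N.XS f).card)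
        (Y ∩ N.XS f) (N.C f Y ∩ N.XS f)

/-- A flow network: a trading network with no self-loop contracts, flow-based choice
functions, and exactly two terminal agents. -/
instance (N : TradingNetwork F X) : DecidablePred N.Terminal := fun f =>
  decidable_of_iff (N.XB f = ∅ ∨ N.XS f = ∅) Iff.rfl

def IsFlowNetwork [Fintype F] (N : TradingNetwork F X) (rkB rkS : F → X → ℕ) : Prop :=
  (∀ x, N.sell x ≠ N.buy x) ∧ N.FlowBased rkB rkS ∧ Fintype.card {f // N.Terminal f} = 2

/-- An outcome is acceptable (individually rational for every firm). -/
def Acceptable (N : TradingNetwork F X) (A : Finset X) : Prop :=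
  ∀ f, N.C f (N.own f A) = N.own f A

/-- `B` is `(A,f)`-acceptable: `f` chooses all its contracts in `B` when offered `B` alongside `A`. -/
def AccAlongside (N : TradingNetwork F X) (A B : Finset X) (f : F) : Prop :=
  N.own f B ⊆ N.C f (N.own f A ∪ N.own f B)

/-- Firm `f` is involved in the contract set `B`. -/
def Involved (N : TradingNetwork F X) (B : Finset X) (f : F) : Prop := (N.own f B).Nonempty

/-- `Z` is a blocking set for the outcome `A`. -/
def Blocks (N : TradingNetwork F X) (A Z : Finset X) : Prop :=
  Z.Nonempty ∧ Disjoint Z A ∧ ∀ f, N.Involved Z f → N.AccAlongside A Z f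

/-- A stable outcome: acceptable and admitting no blocking set. -/
def Stable (N : TradingNetwork F X) (A : Finset X) : Prop :=
  N.Acceptable A ∧ ¬ ∃ Z, N.Blocks A Z

/-- A path: consecutive contracts, with all involved firms distinct. -/
def IsPath (N : TradingNetwork F X) (l : List X) : Prop :=
  ∃ h : l ≠ [], l.Chain' (fun x y => N.buy x = N.sell y) ∧
    (N.sell (l.head h) :: l.map N.buy).Nodup

/-- A cycle: consecutive contracts with distinct sellers, returning to the start. -/
def IsCycle (N : TradingNetwork F X) (l : List X) : Prop :=
  ∃ h : l ≠ [], l.Chain' (fun x y => N.buy x = N.sell y) ∧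
    (l.map N.sell).Nodup ∧ N.buy (l.getLast h) = N.sell (l.head h)

/-- `l` is a blocking path or blocking cycle for the outcome `A`. -/
def BlockingPathOrCycle (N : TradingNetwork F X) (A : Finset X) (l : List X) : Prop :=
  (N.IsPath l ∨ N.IsCycle l) ∧ Disjoint l.toFinset A ∧
    ∀ f, N.Involved l.toFinset f → N.AccAlongside A l.toFinset f

/-- A path-or-cycle-stable outcome. -/
def PathOrCycleStable (N : TradingNetwork F X) (A : Finset X) : Prop :=
  N.Acceptable A ∧ ¬ ∃ l : List X, N.BlockingPathOrCycle A l

/-- Chosen upstream contracts of `f` when offered upstream contracts `Y` and downstream `Z`. -/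
def CB (N : TradingNetwork F X) (f : F) (Y Z : Finset X) : Finset X :=
  N.C f ((Y ∩ N.XB f) ∪ (Z ∩ N.XS f)) ∩ N.XB f

/-- Chosen downstream contracts of `f` when offered downstream `Z` and upstream `Y`. -/
def CS (N : TradingNetwork F X) (f : F) (Z Y : Finset X) : Finset X :=
  N.C f ((Y ∩ N.XB f) ∪ (Z ∩ N.XS f)) ∩ N.XS f

/-- Rejected upstream contracts. -/
def RB (N : TradingNetwork F X) (f : F) (Y Z : Finset X) : Finset X :=
  (Y ∩ N.XB f) \ N.CB f Y Z

/-- Rejected downstream contracts. -/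
def RS (N : TradingNetwork F X) (f : F) (Z Y : Finset X) : Finset X :=
  (Z ∩ N.XS f) \ N.CS f Z Y

/-- Full substitutability (same-side substitutability and cross-side complementarity)
of the choice function of firm `f`. -/
def FullySubstitutableAt (N : TradingNetwork F X) (f : F) : Prop :=
  ∀ Y' Y Z' Z : Finset X, Y' ⊆ Y → Z' ⊆ Z →
    N.RB f Y' Z ⊆ N.RB f Y Z ∧ N.RS f Z' Y ⊆ N.RS f Z Y ∧
    N.RB f Y Z ⊆ N.RB f Y Z' ∧ N.RS f Z Y ⊆ N.RS f Z Y'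

/-- Full substitutability of all choice functions. -/
def FullySubstitutable (N : TradingNetwork F X) : Prop :=
  ∀ f, N.FullySubstitutableAt f

/-- The irrelevance of rejected contracts condition for the choice function of firm `f`. -/
def IRCAt (N : TradingNetwork F X) (f : F) : Prop :=
  ∀ Y Z : Finset X, N.C f Y ⊆ Z → Z ⊆ Y → N.C f Z = N.C f Y

/-- The irrelevance of rejected contracts condition. -/
def IRC (N : TradingNetwork F X) : Prop := ∀ f, N.IRCAt f

end TradingNetwork

/-! ### The two-firm network built from a Partition-style instance -/

/-- Contracts of the two-firm network: `none` is the contract `y` (sold by firm `f` to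
firm `g`), and `some i` is the contract `x_i` (sold by `g` to `f`). -/
abbrev PContract (k : ℕ) : Type := Option (Fin k)

/-- The two-firm trading network: firm `f` is `false`, firm `g` is `true`; their choice
functions are `Cf'` and `Cg'` respectively. -/
def pnet {k : ℕ} (Cf' Cg' : Finset (PContract k) → Finset (PContract k)) :
    TradingNetwork Bool (PContract k) :=
  ⟨fun x => x.isSome, fun x => !x.isSome, fun g W => if g then Cg' W else Cf' W⟩

/-- The total `∑ i, a i  (= 2s)`. -/
def ptotal {k : ℕ} (a : Fin k → ℕ) : ℕ := ∑ i, a i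

/-- The sum of the `a i` over the contracts `x_i` present in `W`. -/
def psum {k : ℕ} (a : Fin k → ℕ) (W : Finset (PContract k)) : ℕ :=
  ∑ i ∈ Finset.univ.filter (fun i => some i ∈ W), a i

/-- The choice function `C_Π^f`: accept all offered upstream contracts `x_i`, and accept
the downstream contract `y` iff the offered `x_i` satisfy `∑ a_i ≥ s`. -/
def CPartF {k : ℕ} (a : Fin k → ℕ) (W : Finset (PContract k)) : Finset (PContract k) :=
  if ptotal a ≤ 2 * psum a W then W else W.erase none

/-- The choice function `C_Π^g`: if `y` is not offered, reject everything; if `y` is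
offered, accept `y` together with those offered `x_i` whose prefix sum `∑ {a_j : x_j`
offered, `j ≤ i}` is at most `s`. -/
def CPartG {k : ℕ} (a : Fin k → ℕ) (W : Finset (PContract k)) : Finset (PContract k) :=
  if none ∈ W then
    insert none (W.filter fun x => ∃ i : Fin k, x = some i ∧
      2 * (∑ j ∈ Finset.univ.filter (fun j => some j ∈ W ∧ j ≤ i), a j) ≤ ptotal a)
  else ∅

/-! ### The oracle network -/

/-- The choice function `C_0^f` on contracts `y, x_1, …, x_{2n}`: accept all upstream
contracts `x_i`, and accept `y` iff at least `n+1` contracts `x_i` are offered. -/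
def C0f (n : ℕ) (W : Finset (PContract (2 * n))) : Finset (PContract (2 * n)) :=
  if n + 1 ≤ (W.erase none).card then W else W.erase none

/-- The choice function `C_I^f` for an `n`-element set `I`: accept all upstream contracts,
and accept `y` iff at least `n+1` contracts `x_i` are offered or the offered upstream set
is exactly `X_I`. -/
def CIf (n : ℕ) (I : Finset (Fin (2 * n))) (W : Finset (PContract (2 * n))) :
    Finset (PContract (2 * n)) :=
  if n + 1 ≤ (W.erase none).card ∨ W.erase none = I.image some then W else W.erase none

/-- The choice function `C^g` of the oracle network (the choice function `C_Π^g` of the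
Partition instance `(1,1,…,1)` of length `2n`). -/
def CgOracle (n : ℕ) : Finset (PContract (2 * n)) → Finset (PContract (2 * n)) :=
  CPartG fun _ => 1

/-! A set blocking the empty outcome must be accepted by both firms. Firm `g` accepts nothing
unless `y` is offered, and then accepts all offered `x_i` only if there are at most `n` of
them; with `y` offered and at most `n` contracts `x_i`, firm `f` accepts `y` only if those
`x_i` are exactly `X_I`. Conversely `X_I ∪ {y}` is accepted by both firms. -/

open TradingNetwork

section TwoFirm

variable {k : ℕ}

lemma pnet_own (Cf Cg : Finset (PContract k) → Finset (PContract k)) (h : Bool)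
    (Z : Finset (PContract k)) : (pnet Cf Cg).own h Z = Z :=
  filter_true_of_mem fun x _ => by rcases x with _ | _ <;> cases h <;> simp [pnet]

lemma pnet_blocks_empty_iff (Cf Cg : Finset (PContract k) → Finset (PContract k))
    (Z : Finset (PContract k)) :
    (pnet Cf Cg).Blocks ∅ Z ↔ Z.Nonempty ∧ Z ⊆ Cf Z ∧ Z ⊆ Cg Z := by
  simp only [Blocks, Involved, AccAlongside, pnet_own, disjoint_empty_right, empty_union,
    true_and, Bool.forall_bool]
  constructor
  · rintro ⟨hne, hf, hg⟩
    exact ⟨hne, hf hne, hg hne⟩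
  · rintro ⟨hne, hf, hg⟩
    exact ⟨hne, fun _ => hf, fun _ => hg⟩

lemma psum_eq_sum_eraseNone (a : Fin k → ℕ) (W : Finset (PContract k)) :
    psum a W = ∑ i ∈ W.eraseNone, a i :=
  sum_congr (by ext; simp) fun _ _ => rfl

lemma none_mem_of_subset_CPartG (a : Fin k → ℕ) {Z : Finset (PContract k)}
    (hZ : Z.Nonempty) (h : Z ⊆ CPartG a Z) : none ∈ Z := by
  by_contra h0
  rw [CPartG, if_neg h0, subset_empty] at h
  exact hZ.ne_empty h

/-- Prefix sums grow with the index, so `g` accepts every offered `x_i` exactly when it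
accepts the last one, whose prefix sum is the whole offered sum. -/
lemma subset_CPartG_iff_of_none_mem (a : Fin k → ℕ) {Z : Finset (PContract k)}
    (h0 : none ∈ Z) : Z ⊆ CPartG a Z ↔ 2 * psum a Z ≤ ptotal a := by
  have prefix_eq (i : Fin k) : univ.filter (fun j => some j ∈ Z ∧ j ≤ i) =
      Z.eraseNone.filter (· ≤ i) := by
    ext j
    simp
  rw [CPartG, if_pos h0, psum_eq_sum_eraseNone]
  constructor
  · intro h
    rcases Z.eraseNone.eq_empty_or_nonempty with hS | hS
    · simp [hS]
    have hmax : some (Z.eraseNone.max' hS) ∈ Z := mem_eraseNone.mp (max'_mem _ hS)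
    obtain ⟨-, j, hj, hsum⟩ :=
      mem_filter.mp ((mem_insert.mp (h hmax)).resolve_left (Option.some_ne_none _))
    rwa [← Option.some_injective _ hj, prefix_eq,
      filter_true_of_mem fun j hj => le_max' _ j hj] at hsum
  · intro h x hx
    rcases x with _ | i
    · exact mem_insert_self _ _
    refine mem_insert_of_mem (mem_filter.mpr ⟨hx, i, rfl, ?_⟩)
    rw [prefix_eq]
    exact le_trans (Nat.mul_le_mul_left 2 (sum_le_sum_of_subset (filter_subset _ _))) h

lemma psum_one (W : Finset (PContract k)) :
    psum (fun _ => 1) W = (W.erase none).card := by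
  rw [psum_eq_sum_eraseNone, sum_const, smul_eq_mul, mul_one, card_eraseNone_eq_card_erase]

lemma ptotal_one : ptotal (fun _ : Fin k => 1) = k := by
  simp [ptotal]

end TwoFirm

section Oracle

variable {n : ℕ}

lemma subset_CgOracle_iff_of_none_mem {Z : Finset (PContract (2 * n))} (h0 : none ∈ Z) :
    Z ⊆ CgOracle n Z ↔ (Z.erase none).card ≤ n := by
  rw [CgOracle, subset_CPartG_iff_of_none_mem _ h0, psum_one, ptotal_one]
  omega

lemma subset_CIf_iff (I : Finset (Fin (2 * n))) {Z : Finset (PContract (2 * n))}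
    (h0 : none ∈ Z) :
    Z ⊆ CIf n I Z ↔ n + 1 ≤ (Z.erase none).card ∨ Z.erase none = I.image some := by
  unfold CIf
  split_ifs with hc
  · exact iff_of_true Subset.rfl hc
  · exact iff_of_false (fun h => by simpa using h h0) hc

lemma oracle_blocks_empty_iff {I : Finset (Fin (2 * n))} (hI : I.card = n)
    (Z : Finset (PContract (2 * n))) :
    (pnet (CIf n I) (CgOracle n)).Blocks ∅ Z ↔ Z = insert none (I.image some) := by
  rw [pnet_blocks_empty_iff]
  constructor
  · rintro ⟨hne, hf, hg⟩
    have h0 := none_mem_of_subset_CPartG _ hne hg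
    have hcard := (subset_CgOracle_iff_of_none_mem h0).mp hg
    rw [← insert_erase h0, ((subset_CIf_iff I h0).mp hf).resolve_left (by omega)]
  · rintro rfl
    have h0 : none ∈ insert none (I.image some) := mem_insert_self _ _
    have herase : (insert none (I.image some)).erase none = I.image some :=
      erase_insert (by simp)
    refine ⟨⟨none, h0⟩, (subset_CIf_iff I h0).mpr (Or.inr herase),
      (subset_CgOracle_iff_of_none_mem h0).mpr ?_⟩
    rw [herase, card_image_of_injective _ (Option.some_injective _), hI]

end Oracle

/-- In the two-firm network with choice functions `C_I^f` and `C^g`, the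
empty outcome is not stable, and the unique blocking set is `X_I ∪ {y}`. -/
theorem oracle_unique_blocking_set (n : ℕ) (I : Finset (Fin (2 * n))) (hI : I.card = n) :
    ¬ (pnet (CIf n I) (CgOracle n)).Stable ∅ ∧
      ∀ Z : Finset (PContract (2 * n)),
        (pnet (CIf n I) (CgOracle n)).Blocks ∅ Z ↔ Z = insert none (I.image some) :=
  ⟨fun ⟨_, hnot⟩ => hnot ⟨_, (oracle_blocks_empty_iff hI _).mpr rfl⟩,
    oracle_blocks_empty_iff hI⟩
end

section
/- The choice functions C_0^f and C_I^f (for any n-element subset I of {1,...,2n}) satisfy full substitutability and IRC. -/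
open Finset

/-!
Both choice functions accept every offered upstream contract `x_i` and accept `y` exactly when the
offered upstream set satisfies a condition that is preserved under enlarging that set: for `C_0^f`
having at least `n + 1` elements, for `C_I^f` additionally being `X_I`, whose proper supersets all
have at least `n + 1` elements. For such a choice function no upstream contract is ever rejected,
`y` is rejected precisely when it is offered and the condition fails, which gives full
substitutability; and a set between `C(W)` and `W` has the same upstream part as `W`, which
gives IRC.
-/

section GatedChoice

variable {k : ℕ} (P : Finset (PContract k) → Prop) [DecidablePred P]

def gatedChoice (W : Finset (PContract k)) : Finset (PContract k) :=
  if P (W.erase none) then W else W.erase none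

theorem erase_gatedChoice (W : Finset (PContract k)) :
    (gatedChoice P W).erase none = W.erase none := by
  unfold gatedChoice
  split_ifs
  · rfl
  · exact erase_idem

theorem none_mem_gatedChoice {W : Finset (PContract k)} :
    none ∈ gatedChoice P W ↔ none ∈ W ∧ P (W.erase none) := by
  unfold gatedChoice
  split_ifs with hP <;> simp [hP]

theorem some_mem_gatedChoice {W : Finset (PContract k)} {i : Fin k} :
    some i ∈ gatedChoice P W ↔ some i ∈ W := by
  unfold gatedChoice
  split_ifs <;> simp

theorem pnet_C_false (Cf Cg : Finset (PContract k) → Finset (PContract k))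
    (W : Finset (PContract k)) : (pnet Cf Cg).C false W = Cf W :=
  rfl

theorem pnet_XB_false (Cf Cg : Finset (PContract k) → Finset (PContract k)) :
    (pnet Cf Cg).XB false = univ.erase none := by
  ext (_ | i) <;> simp [pnet, TradingNetwork.XB]

theorem pnet_XS_false (Cf Cg : Finset (PContract k) → Finset (PContract k)) :
    (pnet Cf Cg).XS false = {none} := by
  ext (_ | i) <;> simp [pnet, TradingNetwork.XS]

theorem pnet_offer_false_erase (Cf Cg : Finset (PContract k) → Finset (PContract k))
    (Y Z : Finset (PContract k)) :
    (Y ∩ (pnet Cf Cg).XB false ∪ Z ∩ (pnet Cf Cg).XS false).erase none = Y.erase none := by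
  ext (_ | i) <;> simp [pnet_XB_false, pnet_XS_false]

variable (Cg : Finset (PContract k) → Finset (PContract k))

theorem pnet_gatedChoice_IRCAt : (pnet (gatedChoice P) Cg).IRCAt false := by
  intro Y Z hYZ hZY
  change gatedChoice P Y ⊆ Z at hYZ
  change gatedChoice P Z = gatedChoice P Y
  have hZ : Z.erase none = Y.erase none := (erase_subset_erase none hZY).antisymm
    (by simpa only [erase_gatedChoice] using erase_subset_erase none hYZ)
  by_cases hP : P (Y.erase none)
  · obtain rfl : Z = Y := hZY.antisymm (by simpa only [gatedChoice, if_pos hP] using hYZ)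
    rfl
  · simp only [gatedChoice, hZ, if_neg hP]

theorem pnet_gatedChoice_RB_false (Y Z : Finset (PContract k)) :
    (pnet (gatedChoice P) Cg).RB false Y Z = ∅ := by
  ext (_ | i) <;> simp [TradingNetwork.RB, TradingNetwork.CB, pnet_C_false, some_mem_gatedChoice,
    pnet_XB_false, pnet_XS_false]

theorem mem_pnet_gatedChoice_RS_false {Y Z : Finset (PContract k)} {x : PContract k} :
    x ∈ (pnet (gatedChoice P) Cg).RS false Z Y ↔ x = none ∧ none ∈ Z ∧ ¬ P (Y.erase none) := by
  rcases x with _ | i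
  · simp only [TradingNetwork.RS, TradingNetwork.CS, pnet_C_false, mem_sdiff, mem_inter,
      none_mem_gatedChoice, pnet_offer_false_erase]
    simp +contextual [pnet_XS_false]
  · simp [TradingNetwork.RS, pnet_XS_false]

theorem pnet_gatedChoice_fullySubstitutableAt (hP : Monotone P) :
    (pnet (gatedChoice P) Cg).FullySubstitutableAt false := by
  intro Y' Y Z' Z hY hZ
  simp only [pnet_gatedChoice_RB_false, subset_refl, true_and]
  refine ⟨fun x hx => ?_, fun x hx => ?_⟩ <;> rw [mem_pnet_gatedChoice_RS_false] at hx ⊢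
  · exact ⟨hx.1, hZ hx.2.1, hx.2.2⟩
  · exact ⟨hx.1, hx.2.1, fun h => hx.2.2 (hP (erase_subset_erase none hY) h)⟩

end GatedChoice

theorem monotone_succ_le_card_or_eq {α : Type*} {S : Finset α} {n : ℕ} (hS : S.card = n) :
    Monotone fun U : Finset α => n + 1 ≤ U.card ∨ U = S := by
  rintro U V hUV (hU | rfl)
  · exact .inl (hU.trans (card_le_card hUV))
  · rcases hUV.eq_or_ssubset with rfl | hlt
    · exact .inr rfl
    · exact .inl (hS ▸ card_lt_card hlt)

/-- The choice functions `C_0^f` and `C_I^f` (for any `n`-element set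
`I`) satisfy full substitutability and the irrelevance of rejected contracts condition. -/
theorem oracle_choice_fullySubstitutable_IRC (n : ℕ) (I : Finset (Fin (2 * n)))
    (hI : I.card = n) :
    ((pnet (C0f n) (CgOracle n)).IRCAt false ∧
      (pnet (C0f n) (CgOracle n)).FullySubstitutableAt false) ∧
    ((pnet (CIf n I) (CgOracle n)).IRCAt false ∧
      (pnet (CIf n I) (CgOracle n)).FullySubstitutableAt false) := by
  have hC0 : C0f n = gatedChoice fun U => n + 1 ≤ U.card := rfl
  have hCI : CIf n I = gatedChoice fun U => n + 1 ≤ U.card ∨ U = I.image some := rfl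
  have hIX : (I.image some).card = n :=
    (card_image_of_injective I (Option.some_injective _)).trans hI
  rw [hC0, hCI]
  exact ⟨⟨pnet_gatedChoice_IRCAt _ _,
      pnet_gatedChoice_fullySubstitutableAt _ _ fun _ _ hUV hU => hU.trans (card_le_card hUV)⟩,
    ⟨pnet_gatedChoice_IRCAt _ _,
      pnet_gatedChoice_fullySubstitutableAt _ _ (monotone_succ_le_card_or_eq hIX)⟩⟩
end
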